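/- For all objects X, X' of 𝒜, the structure isomorphism μ_{X,X'} : ω(X)⊗ω(X') ≅ ω(X⊠X') intertwines the coactions up to the bialgebra multiplication: ρ_{X⊠X'}∘μ_{X,X'} = (μ_{X,X'} ⊗ m_C)∘(id_{ω(X)} ⊗ τ ⊗ id_C)∘(ρ_X ⊗ ρ_{X'}), where m_C : C⊗C → C is the multiplication of C and τ : C ⊗ ω(X') → ω(X') ⊗ C is the flip. Moreover ρ_𝟙(u(1)) = u(1) ⊗ 1_C. -/

import Mathlib

/-!
STATEMENT 10: For all objects `X, X'` of `𝒜`, the structure isomorphism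
`μ_{X,X'} : ω(X)⊗ω(X') ≅ ω(X⊠X')` intertwines the coactions up to the bialgebra
multiplication: `ρ_{X⊠X'}∘μ_{X,X'} = (μ_{X,X'} ⊗ m_C)∘(id ⊗ τ ⊗ id)∘(ρ_X ⊗ ρ_{X'})`,
and `ρ_𝟙(u(1)) = u(1) ⊗ 1_C`.
-/

open CategoryTheory TensorProduct MonoidalCategory

noncomputable section

namespace Tannaka

variable (k : Type) [Field k] (A : Type) [SmallCategory A] [DecidableEq A]
  [Preadditive A] [CategoryTheory.Linear k A]
  [MonoidalCategory A] [MonoidalPreadditive A] [MonoidalLinear k A]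
variable (ω : A ⥤ ModuleCat k) [ω.Additive] [Functor.Linear k ω] [ω.Monoidal]

/-- The direct sum `⨁_{X ∈ Ob 𝒜} ω(X)^∨ ⊗ ω(X)`. -/
abbrev HH0pre : Type := DirectSum A (fun X => Module.Dual k (ω.obj X) ⊗[k] ω.obj X)

instance : AddCommGroup (HH0pre k A ω) :=
  @DFinsupp.addCommGroup A (fun X => Module.Dual k (ω.obj X) ⊗[k] ω.obj X) (fun _ => inferInstance)

/-- The subspace spanned by the elements `(φ∘ω(f))⊗v − φ⊗ω(f)(v)`. -/
def HH0rel : Submodule k (HH0pre k A ω) :=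
  Submodule.span k
    { z | ∃ (X Y : A) (f : X ⟶ Y) (φ : Module.Dual k (ω.obj Y)) (v : ω.obj X),
        z = DirectSum.lof k A (fun X => Module.Dual k (ω.obj X) ⊗[k] ω.obj X) X
              ((φ ∘ₗ (ω.map f).hom) ⊗ₜ[k] v)
          - DirectSum.lof k A (fun X => Module.Dual k (ω.obj X) ⊗[k] ω.obj X) Y
              (φ ⊗ₜ[k] (ω.map f v)) }

/-- `C = HH₀(𝒜, ω^∨ ⊗ ω)`. -/
abbrev HH0 : Type := HH0pre k A ω ⧸ HH0rel k A ω

/-- The class `[φ ⊗ v]` in `HH₀`. -/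
def cls (X : A) (φ : Module.Dual k (ω.obj X)) (v : ω.obj X) : HH0 k A ω :=
  Submodule.Quotient.mk
    (DirectSum.lof k A (fun X => Module.Dual k (ω.obj X) ⊗[k] ω.obj X) X (φ ⊗ₜ[k] v))

/-- The functional `(φ⊗φ')∘μ⁻¹ ∈ ω(X⊠X')^∨`. -/
def dPair (X X' : A) (φ : Module.Dual k (ω.obj X)) (φ' : Module.Dual k (ω.obj X')) :
    Module.Dual k (ω.obj (X ⊗ X')) :=
  (TensorProduct.lid k k).toLinearMap ∘ₗ TensorProduct.map φ φ' ∘ₗ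
    ((Functor.OplaxMonoidal.δ ω X X').hom : _ →ₗ[k] _)

/-- The functional `ū = u⁻¹ ∈ ω(𝟙)^∨`. -/
def uBar : Module.Dual k (ω.obj (𝟙_ A)) := ((Functor.OplaxMonoidal.η ω).hom : _ →ₗ[k] _)

theorem _root_.Module.Basis.map_coord {R M N ι : Type*} [CommSemiring R] [AddCommMonoid M]
    [Module R M] [AddCommMonoid N] [Module R N] (b : Module.Basis ι R M) (e : M ≃ₗ[R] N) (i : ι) :
    (b.map e).coord i = b.coord i ∘ₗ e.symm.toLinearMap := by
  ext x
  simp [Module.Basis.coord]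

theorem _root_.Module.Basis.tensorProduct_coord {R M N ι κ : Type*} [CommSemiring R]
    [AddCommMonoid M] [Module R M] [AddCommMonoid N] [Module R N]
    (b : Module.Basis ι R M) (c : Module.Basis κ R N) (i : ι) (j : κ) :
    (b.tensorProduct c).coord (i, j) =
      (TensorProduct.lid R R).toLinearMap ∘ₗ TensorProduct.map (b.coord i) (c.coord j) := by
  ext x y
  simp [Module.Basis.tensorProduct_repr_tmul_apply, mul_comm]

theorem _root_.Module.Basis.singleton_coord (ι R : Type*) [Unique ι] [Semiring R] (i : ι) :
    (Module.Basis.singleton ι R).coord i = LinearMap.id := by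
  ext
  simp

theorem coaction_monoidal_compatibility
    [∀ X : A, FiniteDimensional k (ω.obj X)]
    -- the coaction maps, characterised on elements via any basis:
    (ρ : ∀ X : A, (ω.obj X →ₗ[k] (ω.obj X ⊗[k] HH0 k A ω)))
    (hρ : ∀ (X : A) (ι : Type) [Fintype ι] (b : Module.Basis ι k (ω.obj X)) (v : ω.obj X),
      ρ X v = ∑ i : ι, (b i) ⊗ₜ[k] (cls k A ω X (b.coord i) v))
    -- the bialgebra multiplication and unit of `C`, characterised on classes:
    (mul : HH0 k A ω →ₗ[k] HH0 k A ω →ₗ[k] HH0 k A ω)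
    (hmul : ∀ (X X' : A) (φ : Module.Dual k (ω.obj X)) (φ' : Module.Dual k (ω.obj X'))
        (v : ω.obj X) (v' : ω.obj X'),
      mul (cls k A ω X φ v) (cls k A ω X' φ' v') =
        cls k A ω (X ⊗ X') (dPair k A ω X X' φ φ')
          (Functor.LaxMonoidal.μ ω X X' (v ⊗ₜ[k] v')))
    (one : HH0 k A ω)
    (hone : one = cls k A ω (𝟙_ A) (uBar k A ω) (Functor.LaxMonoidal.ε ω (1 : k))) :
    -- `μ_{X,X'}` intertwines the coactions up to the multiplication `m_C`:
    (∀ (X X' : A) (v : ω.obj X) (v' : ω.obj X'),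
      ρ (X ⊗ X') (Functor.LaxMonoidal.μ ω X X' (v ⊗ₜ[k] v')) =
        (TensorProduct.map ((Functor.LaxMonoidal.μ ω X X').hom : _ →ₗ[k] _)
            (TensorProduct.lift mul))
          ((TensorProduct.tensorTensorTensorComm k (ω.obj X) (HH0 k A ω)
              (ω.obj X') (HH0 k A ω)) ((ρ X v) ⊗ₜ[k] (ρ X' v')))) ∧
    -- and `ρ_𝟙(u(1)) = u(1) ⊗ 1_C`:
    ρ (𝟙_ A) (Functor.LaxMonoidal.ε ω (1 : k)) =
      (Functor.LaxMonoidal.ε ω (1 : k)) ⊗ₜ[k] one := by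
  constructor
  · -- Compute `ρ_{X⊠X'}` in the basis `μ(bᵢ ⊗ b'ⱼ)`: its coordinate functionals are
    -- `dPair (bᵢ^∨) (b'ⱼ^∨)`, so the expansion matches `hmul` term by term.
    intro X X' v v'
    let b := Module.finBasis k (ω.obj X)
    let b' := Module.finBasis k (ω.obj X')
    rw [hρ X _ b v, hρ X' _ b' v',
      hρ (X ⊗ X') _ ((b.tensorProduct b').map (Functor.Monoidal.μIso ω X X').toLinearEquiv)]
    simp only [sum_tmul, tmul_sum, map_sum, tensorTensorTensorComm_tmul, map_tmul, lift.tmul, hmul,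
      Fintype.sum_prod_type_right]
    refine Finset.sum_congr rfl fun j _ => Finset.sum_congr rfl fun i _ => ?_
    rw [Module.Basis.map_apply, Module.Basis.tensorProduct_apply, Module.Basis.map_coord,
      Module.Basis.tensorProduct_coord]
    rfl
  · rw [hρ _ PUnit ((Module.Basis.singleton PUnit k).map (Functor.Monoidal.εIso ω).toLinearEquiv),
      Fintype.sum_unique, hone, Module.Basis.map_coord, Module.Basis.singleton_coord,
      Module.Basis.map_apply, Module.Basis.singleton_apply, LinearMap.id_comp]
    rfl

end Tannaka
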